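/- arXiv:2310.02697 — 8 statements merged into one kernel-verified Lean document; each statement's English description precedes it below -/
import Mathlib

section
/- Let α₀, α₁, β₁, β₂ ∈ ℝ with β₁ > 0 and β₂ > 0, let τ₁, τ₂ ∈ ℝ, and let ω > 0. If χ(iω) = 0, i.e. −ω² + iα₁ω + α₀ + β₁·exp(−iωτ₁) + β₂·exp(−iωτ₂) = 0, then the 'triangle condition' (β₁ − β₂)² ≤ (ω² − α₀)² + α₁²ω² ≤ (β₁ + β₂)² holds. In particular, Hopf frequencies ω of the two-delay system are restricted to the set of ω for which the modulus √((ω² − α₀)² + α₁²ω²) lies between |β₁ − β₂| and β₁ + β₂. -/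
/-- The characteristic function `χ(λ) = λ² + α₁λ + α₀ + β₁·exp(−λτ₁) + β₂·exp(−λτ₂)`
of the linearized two-delay glucose–insulin model. -/
noncomputable def chi (α₀ α₁ β₁ β₂ τ₁ τ₂ : ℝ) (lam : ℂ) : ℂ :=
  lam ^ 2 + (α₁ : ℂ) * lam + (α₀ : ℂ) + (β₁ : ℂ) * Complex.exp (-lam * (τ₁ : ℂ))
    + (β₂ : ℂ) * Complex.exp (-lam * (τ₂ : ℂ))

/-!
On the imaginary axis both delay terms `exp(−iωτⱼ)` lie on the unit circle, so `χ(iω) = 0`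
writes the point `(ω² − α₀) − iα₁ω` as a sum of two vectors of lengths `β₁` and `β₂`.
The triangle inequality then puts its modulus between `|β₁ − β₂|` and `β₁ + β₂`.
-/

open Complex

theorem norm_smul_add_smul_mem_Icc_of_norm_eq_one {E : Type*} [SeminormedAddCommGroup E]
    [NormedSpace ℝ E] {a b : ℝ} (ha : 0 ≤ a) (hb : 0 ≤ b) {u v : E} (hu : ‖u‖ = 1)
    (hv : ‖v‖ = 1) : ‖a • u + b • v‖ ∈ Set.Icc |a - b| (a + b) := by
  have hau : ‖a • u‖ = a := by rw [norm_smul, hu, mul_one, Real.norm_of_nonneg ha]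
  have hbv : ‖b • v‖ = b := by rw [norm_smul, hv, mul_one, Real.norm_of_nonneg hb]
  constructor
  · simpa [hau, hbv] using abs_norm_sub_norm_le (a • u) (-(b • v))
  · simpa [hau, hbv] using norm_add_le (a • u) (b • v)

theorem chi_I_mul_ofReal (α₀ α₁ β₁ β₂ τ₁ τ₂ ω : ℝ) :
    chi α₀ α₁ β₁ β₂ τ₁ τ₂ (I * ω) =
      β₁ • exp (↑(-(ω * τ₁)) * I) + β₂ • exp (↑(-(ω * τ₂)) * I) - ⟨ω ^ 2 - α₀, -(α₁ * ω)⟩ := by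
  apply Complex.ext <;> simp [chi, Complex.real_smul, pow_two] <;> ring_nf

theorem sq_norm_delay_terms_of_chi_eq_zero {α₀ α₁ β₁ β₂ τ₁ τ₂ ω : ℝ}
    (h : chi α₀ α₁ β₁ β₂ τ₁ τ₂ (I * ω) = 0) :
    ‖β₁ • exp (↑(-(ω * τ₁)) * I) + β₂ • exp (↑(-(ω * τ₂)) * I)‖ ^ 2 =
      (ω ^ 2 - α₀) ^ 2 + α₁ ^ 2 * ω ^ 2 := by
  rw [chi_I_mul_ofReal, sub_eq_zero] at h
  rw [h, Complex.sq_norm, normSq_mk]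
  ring

theorem stmt0_general (α₀ α₁ β₁ β₂ τ₁ τ₂ ω : ℝ) (hβ₁ : 0 < β₁) (hβ₂ : 0 < β₂)
    (hchi : chi α₀ α₁ β₁ β₂ τ₁ τ₂ (Complex.I * (ω : ℂ)) = 0) :
    ((β₁ - β₂) ^ 2 ≤ (ω ^ 2 - α₀) ^ 2 + α₁ ^ 2 * ω ^ 2 ∧
      (ω ^ 2 - α₀) ^ 2 + α₁ ^ 2 * ω ^ 2 ≤ (β₁ + β₂) ^ 2) ∧
    (|β₁ - β₂| ≤ Real.sqrt ((ω ^ 2 - α₀) ^ 2 + α₁ ^ 2 * ω ^ 2) ∧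
      Real.sqrt ((ω ^ 2 - α₀) ^ 2 + α₁ ^ 2 * ω ^ 2) ≤ β₁ + β₂) := by
  obtain ⟨hlower, hupper⟩ := norm_smul_add_smul_mem_Icc_of_norm_eq_one hβ₁.le hβ₂.le
    (norm_exp_ofReal_mul_I (-(ω * τ₁))) (norm_exp_ofReal_mul_I (-(ω * τ₂)))
  have hsq := sq_norm_delay_terms_of_chi_eq_zero hchi
  rw [← hsq, Real.sqrt_sq (norm_nonneg _)]
  exact ⟨⟨sq_le_sq.2 (hlower.trans (le_abs_self _)), pow_le_pow_left₀ (norm_nonneg _) hupper 2⟩,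
    hlower, hupper⟩

/-- If `χ(iω) = 0` for some `ω > 0`, `β₁, β₂ > 0`, then the triangle condition
`(β₁ − β₂)² ≤ (ω² − α₀)² + α₁²ω² ≤ (β₁ + β₂)²` holds; equivalently, the modulus
`√((ω² − α₀)² + α₁²ω²)` lies between `|β₁ − β₂|` and `β₁ + β₂`. -/
theorem stmt0 (α₀ α₁ β₁ β₂ τ₁ τ₂ ω : ℝ) (hβ₁ : 0 < β₁) (hβ₂ : 0 < β₂)
    (hω : 0 < ω) (hchi : chi α₀ α₁ β₁ β₂ τ₁ τ₂ (Complex.I * (ω : ℂ)) = 0) :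
    ((β₁ - β₂) ^ 2 ≤ (ω ^ 2 - α₀) ^ 2 + α₁ ^ 2 * ω ^ 2 ∧
      (ω ^ 2 - α₀) ^ 2 + α₁ ^ 2 * ω ^ 2 ≤ (β₁ + β₂) ^ 2) ∧
    (|β₁ - β₂| ≤ Real.sqrt ((ω ^ 2 - α₀) ^ 2 + α₁ ^ 2 * ω ^ 2) ∧
      Real.sqrt ((ω ^ 2 - α₀) ^ 2 + α₁ ^ 2 * ω ^ 2) ≤ β₁ + β₂) :=
  stmt0_general α₀ α₁ β₁ β₂ τ₁ τ₂ ω hβ₁ hβ₂ hchi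
end

section
/- Let α₀, α₁ ∈ ℝ, β₁ > 0, β₂ > 0, and ω > 0. Set z := (ω² − α₀) − i·α₁ω ∈ ℂ and A := |z| = √((ω² − α₀)² + α₁²ω²). Assume A > 0 and |β₁ − β₂| ≤ A ≤ β₁ + β₂ (so both arccos arguments below lie in [−1, 1]). Then the delays τ₁ := (−arg z − arccos((β₁² + A² − β₂²)/(2β₁A)))/ω and τ₂ := (−arg z + arccos((β₂² + A² − β₁²)/(2β₂A)))/ω satisfy χ(iω) = 0, where arg denotes the principal argument. Thus for every frequency ω satisfying the triangle condition there is an explicit parametric solution (τ₁(ω), τ₂(ω)) on the critical (Hopf) curve. -/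
open Complex

namespace Triangle

/-- In a triangle with side lengths `a`, `b`, `c`, the angle between the sides `a` and `c`. -/
noncomputable def angle (a b c : ℝ) : ℝ :=
  Real.arccos ((a ^ 2 + c ^ 2 - b ^ 2) / (2 * a * c))

variable {a b c : ℝ}

theorem cosineRatio_mem_Icc (ha : 0 < a) (hc : 0 < c) (h₁ : |a - b| ≤ c) (h₂ : c ≤ a + b) :
    (a ^ 2 + c ^ 2 - b ^ 2) / (2 * a * c) ∈ Set.Icc (-1 : ℝ) 1 := by
  obtain ⟨hba, hab⟩ := abs_le.mp h₁
  have h2ac : 0 < 2 * a * c := by positivity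
  constructor
  · rw [le_div_iff₀ h2ac]
    nlinarith
  · rw [div_le_one h2ac]
    nlinarith

theorem cos_angle (ha : 0 < a) (hc : 0 < c) (h₁ : |a - b| ≤ c) (h₂ : c ≤ a + b) :
    Real.cos (angle a b c) = (a ^ 2 + c ^ 2 - b ^ 2) / (2 * a * c) :=
  let h := cosineRatio_mem_Icc ha hc h₁ h₂
  Real.cos_arccos h.1 h.2

theorem mul_cos_angle_add_mul_cos_angle (ha : 0 < a) (hb : 0 < b) (hc : 0 < c)
    (h₁ : |a - b| ≤ c) (h₂ : c ≤ a + b) :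
    a * Real.cos (angle a b c) + b * Real.cos (angle b a c) = c := by
  rw [cos_angle ha hc h₁ h₂, cos_angle hb hc (abs_sub_comm a b ▸ h₁) (add_comm a b ▸ h₂)]
  field_simp
  ring

theorem mul_sin_angle (ha : 0 < a) (hb : 0 < b) (hc : c ≠ 0) :
    a * Real.sin (angle a b c) = b * Real.sin (angle b a c) := by
  have hsq : a ^ 2 * (1 - ((a ^ 2 + c ^ 2 - b ^ 2) / (2 * a * c)) ^ 2)
      = b ^ 2 * (1 - ((b ^ 2 + c ^ 2 - a ^ 2) / (2 * b * c)) ^ 2) := by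
    field_simp
    ring
  have mul_sqrt {x : ℝ} (hx : 0 < x) (y : ℝ) : x * √y = √(x ^ 2 * y) := by
    rw [Real.sqrt_mul (sq_nonneg x), Real.sqrt_sq hx.le]
  rw [angle, angle, Real.sin_arccos, Real.sin_arccos, mul_sqrt ha, mul_sqrt hb, hsq]

theorem mul_exp_angle_add_mul_exp_neg_angle (ha : 0 < a) (hb : 0 < b) (hc : 0 < c)
    (h₁ : |a - b| ≤ c) (h₂ : c ≤ a + b) :
    (a : ℂ) * exp (angle a b c * I) + b * exp (-angle b a c * I) = c := by
  have hre : (a : ℂ) * cos (angle a b c) + b * cos (angle b a c) = c := by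
    exact_mod_cast mul_cos_angle_add_mul_cos_angle ha hb hc h₁ h₂
  have him : (a : ℂ) * sin (angle a b c) = b * sin (angle b a c) := by
    exact_mod_cast mul_sin_angle ha hb hc.ne'
  rw [exp_mul_I, exp_mul_I, cos_neg, sin_neg]
  linear_combination hre + I * him

end Triangle

/-- For every frequency `ω > 0` satisfying the triangle condition
`|β₁ − β₂| ≤ A ≤ β₁ + β₂` with `A = |z|`, `z = (ω² − α₀) − iα₁ω`, the explicit delays
`τ₁ = (−arg z − arccos((β₁² + A² − β₂²)/(2β₁A)))/ω` and
`τ₂ = (−arg z + arccos((β₂² + A² − β₁²)/(2β₂A)))/ω` give a purely imaginary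
characteristic root: `χ(iω) = 0`. -/
theorem stmt1 (α₀ α₁ β₁ β₂ ω : ℝ) (hβ₁ : 0 < β₁) (hβ₂ : 0 < β₂) (hω : 0 < ω)
    (z : ℂ) (hz : z = ((ω ^ 2 - α₀ : ℝ) : ℂ) - Complex.I * ((α₁ * ω : ℝ) : ℂ))
    (A : ℝ) (hA : A = ‖z‖) (hApos : 0 < A)
    (htri₁ : |β₁ - β₂| ≤ A) (htri₂ : A ≤ β₁ + β₂)
    (τ₁ τ₂ : ℝ)
    (hτ₁ : τ₁ = (-z.arg - Real.arccos ((β₁ ^ 2 + A ^ 2 - β₂ ^ 2) / (2 * β₁ * A))) / ω)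
    (hτ₂ : τ₂ = (-z.arg + Real.arccos ((β₂ ^ 2 + A ^ 2 - β₁ ^ 2) / (2 * β₂ * A))) / ω) :
    chi α₀ α₁ β₁ β₂ τ₁ τ₂ (Complex.I * (ω : ℂ)) = 0 := by
  have hω' : (ω : ℂ) ≠ 0 := ofReal_ne_zero.mpr hω.ne'
  have hpoly : (I * ω) ^ 2 + α₁ * (I * ω) + α₀ = -z := by
    rw [hz]
    push_cast
    linear_combination ω ^ 2 * I_sq
  have hpolar : (A : ℂ) * exp (z.arg * I) = z := hA ▸ norm_mul_exp_arg_mul_I z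
  have hclosure := Triangle.mul_exp_angle_add_mul_exp_neg_angle hβ₁ hβ₂ hApos htri₁ htri₂
  have e₁ : -(I * ω) * τ₁ = z.arg * I + Triangle.angle β₁ β₂ A * I := by
    rw [hτ₁, ← Triangle.angle]
    push_cast
    linear_combination (z.arg + Triangle.angle β₁ β₂ A) * I * mul_inv_cancel₀ hω'
  have e₂ : -(I * ω) * τ₂ = z.arg * I + -Triangle.angle β₂ β₁ A * I := by
    rw [hτ₂, ← Triangle.angle]
    push_cast
    linear_combination (z.arg - Triangle.angle β₂ β₁ A) * I * mul_inv_cancel₀ hω'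
  rw [chi, e₁, e₂, exp_add, exp_add]
  linear_combination hpoly + exp (z.arg * I) * hclosure + hpolar
end

section
/- Let α₀, α₁ ∈ ℝ and β₁, β₂ > 0 with β₁ + β₂ > |α₀|, and let ω_G be the unique positive solution of (ω² − α₀)² + α₁²ω² = (β₁ + β₂)². Assume ω_G² > α₀. Then for every integer k, setting both delays equal, τ₁ = τ₂ = τ with τ := (1/ω_G)·( arctan(α₁ω_G/(ω_G² − α₀)) + 2πk ), one has χ(iω_G) = 0. In particular, the endpoint of the Hopf curve with τ_G = τ₂ − τ₁ = 0 occurs at frequency ω_G with τ_I(ω_G) = (1/ω_G)·arctan(α₁ω_G/(ω_G² − α₀)) + 2πk*/ω_G for the smallest integer k* making this positive. -/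
/-- Endpoint of the Hopf curve with `τ_G = τ₂ − τ₁ = 0`: if `ω_G` is the unique positive
solution of `(ω² − α₀)² + α₁²ω² = (β₁ + β₂)²` and `ω_G² > α₀`, then for every integer `k`,
setting both delays equal to `τ = (arctan(α₁ω_G/(ω_G² − α₀)) + 2πk)/ω_G` yields
`χ(iω_G) = 0`. -/
theorem stmt4 (α₀ α₁ β₁ β₂ ωG : ℝ) (hβ₁ : 0 < β₁) (hβ₂ : 0 < β₂)
    (hc : |α₀| < β₁ + β₂) (hωG : 0 < ωG)
    (heq : (ωG ^ 2 - α₀) ^ 2 + α₁ ^ 2 * ωG ^ 2 = (β₁ + β₂) ^ 2)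
    (huniq : ∀ ω : ℝ, 0 < ω →
      (ω ^ 2 - α₀) ^ 2 + α₁ ^ 2 * ω ^ 2 = (β₁ + β₂) ^ 2 → ω = ωG)
    (hgt : α₀ < ωG ^ 2) :
    ∀ k : ℤ,
      chi α₀ α₁ β₁ β₂
        ((Real.arctan (α₁ * ωG / (ωG ^ 2 - α₀)) + 2 * Real.pi * k) / ωG)
        ((Real.arctan (α₁ * ωG / (ωG ^ 2 - α₀)) + 2 * Real.pi * k) / ωG)
        (Complex.I * (ωG : ℂ)) = 0 := by
  intro k
  set a : ℝ := ωG ^ 2 - α₀ with ha_def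
  set b : ℝ := α₁ * ωG with hb_def
  set r : ℝ := β₁ + β₂ with hr_def
  have ha : 0 < a := by simp [ha_def]; linarith
  have hr : 0 < r := by positivity
  have hr2 : r ^ 2 = a ^ 2 + b ^ 2 := by rw [ha_def, hb_def]; nlinarith [heq]
  set θ : ℝ := Real.arctan (b / a) with hθ_def
  have hs : Real.sqrt (1 + (b / a) ^ 2) = r / a := by
    rw [show 1 + (b / a) ^ 2 = (r / a) ^ 2 by field_simp; linarith [hr2]]
    exact Real.sqrt_sq (by positivity)
  have hcos : Real.cos θ = a / r := by
    rw [hθ_def, Real.cos_arctan, hs]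
    field_simp
  have hsin : Real.sin θ = b / r := by
    rw [hθ_def, Real.sin_arctan, hs]
    field_simp
  have hωC : (ωG : ℂ) ≠ 0 := by exact_mod_cast hωG.ne'
  have harg : -(Complex.I * (ωG : ℂ)) * (((θ + 2 * Real.pi * k) / ωG : ℝ) : ℂ)
      = ((-θ : ℝ) : ℂ) * Complex.I + (-k : ℤ) * (2 * (Real.pi : ℂ) * Complex.I) := by
    push_cast
    field_simp
    ring
  have key : Complex.exp (-(Complex.I * (ωG : ℂ)) * (((θ + 2 * Real.pi * k) / ωG : ℝ) : ℂ))
      = (a / r : ℝ) - (b / r : ℝ) * Complex.I := by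
    rw [harg, Complex.exp_add, Complex.exp_int_mul_two_pi_mul_I, mul_one,
      Complex.exp_mul_I, ← Complex.ofReal_cos, ← Complex.ofReal_sin, Real.cos_neg,
      Real.sin_neg, hcos, hsin]
    push_cast
    ring
  simp only [chi, key]
  have haC : (a : ℂ) = (ωG : ℂ) ^ 2 - (α₀ : ℂ) := by push_cast [ha_def]; ring
  have hbC : (b : ℂ) = (α₁ : ℂ) * (ωG : ℂ) := by push_cast [hb_def]; ring
  have hrC : (r : ℂ) ≠ 0 := by exact_mod_cast hr.ne'
  push_cast [haC, hbC, hr_def] at *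
  field_simp
  linear_combination ((ωG:ℂ)^2*((β₁:ℂ)+β₂)) * Complex.I_sq
end

section
/- Let α₀, α₁ ∈ ℝ and β₁, β₂ > 0 with β₂ > |α₀ + β₁|, and let ω_I be the unique positive solution of (ω² − α₀ − β₁)² + α₁²ω² = β₂². Assume ω_I² > α₀ + β₁. Then for every integer l, setting τ₁ = 0 and τ₂ := (1/ω_I)·( arctan(α₁ω_I/(ω_I² − α₀ − β₁)) + 2πl ), one has χ(iω_I) = 0. In particular, the endpoint of the Hopf curve with τ_I = τ₁ = 0 occurs at frequency ω_I with τ_G(ω_I) = (1/ω_I)·arctan(α₁ω_I/(ω_I² − α₀ − β₁)) + 2πl*/ω_I for the smallest integer l* making this positive. -/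
/-- Endpoint of the Hopf curve with `τ_I = τ₁ = 0`: if `ω_I` is the unique positive
solution of `(ω² − α₀ − β₁)² + α₁²ω² = β₂²` and `ω_I² > α₀ + β₁`, then for every integer
`l`, setting `τ₁ = 0` and `τ₂ = (arctan(α₁ω_I/(ω_I² − α₀ − β₁)) + 2πl)/ω_I` yields
`χ(iω_I) = 0`. -/
theorem stmt5 (α₀ α₁ β₁ β₂ ωI : ℝ) (hβ₁ : 0 < β₁) (hβ₂ : 0 < β₂)
    (hc : |α₀ + β₁| < β₂) (hωI : 0 < ωI)
    (heq : (ωI ^ 2 - α₀ - β₁) ^ 2 + α₁ ^ 2 * ωI ^ 2 = β₂ ^ 2)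
    (huniq : ∀ ω : ℝ, 0 < ω →
      (ω ^ 2 - α₀ - β₁) ^ 2 + α₁ ^ 2 * ω ^ 2 = β₂ ^ 2 → ω = ωI)
    (hgt : α₀ + β₁ < ωI ^ 2) :
    ∀ l : ℤ,
      chi α₀ α₁ β₁ β₂ 0
        ((Real.arctan (α₁ * ωI / (ωI ^ 2 - α₀ - β₁)) + 2 * Real.pi * l) / ωI)
        (Complex.I * (ωI : ℂ)) = 0 := by
  intro l
  set a : ℝ := ωI ^ 2 - α₀ - β₁ with ha_def
  set b : ℝ := α₁ * ωI with hb_def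
  have ha : 0 < a := by simp only [ha_def]; linarith
  set θ : ℝ := Real.arctan (b / a) with hθ_def
  have hsum : a ^ 2 + b ^ 2 = β₂ ^ 2 := by
    simp only [ha_def, hb_def]; nlinarith [heq]
  have hsq : Real.sqrt (1 + (b / a) ^ 2) = β₂ / a := by
    rw [show 1 + (b / a) ^ 2 = (β₂ / a) ^ 2 by field_simp; nlinarith [hsum]]
    exact Real.sqrt_sq (by positivity)
  have hcos : Real.cos θ = a / β₂ := by
    rw [hθ_def, Real.cos_arctan, hsq]
    field_simp
  have hsin : Real.sin θ = b / β₂ := by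
    rw [hθ_def, Real.sin_arctan, hsq]
    field_simp
  have hωC : (ωI : ℂ) ≠ 0 := by exact_mod_cast hωI.ne'
  have harg : -(Complex.I * (ωI : ℂ)) * (((θ + 2 * Real.pi * l) / ωI : ℝ) : ℂ)
      = ((-(θ + 2 * Real.pi * l) : ℝ) : ℂ) * Complex.I := by
    push_cast
    field_simp
  have hcosR : Real.cos (-(θ + 2 * Real.pi * l)) = a / β₂ := by
    rw [Real.cos_neg, show θ + 2 * Real.pi * l = θ + l * (2 * Real.pi) by ring,
      Real.cos_add_int_mul_two_pi, hcos]
  have hsinR : Real.sin (-(θ + 2 * Real.pi * l)) = -(b / β₂) := by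
    rw [Real.sin_neg, show θ + 2 * Real.pi * l = θ + l * (2 * Real.pi) by ring,
      Real.sin_add_int_mul_two_pi, hsin]
  have hexp : Complex.exp (-(Complex.I * (ωI : ℂ)) *
      (((θ + 2 * Real.pi * l) / ωI : ℝ) : ℂ))
      = ((a / β₂ : ℝ) : ℂ) - ((b / β₂ : ℝ) : ℂ) * Complex.I := by
    rw [harg, Complex.exp_mul_I, ← Complex.ofReal_cos, ← Complex.ofReal_sin,
      hcosR, hsinR]
    push_cast
    ring
  unfold chi
  rw [hexp]
  have hβ₂C : (β₂ : ℂ) ≠ 0 := by exact_mod_cast hβ₂.ne'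
  have hI : Complex.I ^ 2 = -1 := Complex.I_sq
  have haC : (a : ℂ) = (ωI : ℂ) ^ 2 - α₀ - β₁ := by push_cast [ha_def]; ring
  have hbC : (b : ℂ) = α₁ * ωI := by simp [hb_def]
  push_cast
  rw [haC, hbC]
  simp only [Complex.ofReal_zero, mul_zero, neg_zero, zero_mul, Complex.exp_zero]
  field_simp
  ring_nf
  rw [hI]
  ring
end

section
/- Suppose β₁ = 0, β₂ > |α₀|, and let ω₀ be the unique positive solution of (ω² − α₀)² + α₁²ω² = β₂². Then for every ω > 0 and all τ₁, τ₂ ∈ ℝ: χ(iω) = 0 holds if and only if ω = ω₀ and β₂·exp(−iω₀τ₂) = (ω₀² − α₀) − i·α₁ω₀; in particular the condition is independent of τ₁, so the set of delay pairs (τ_I, τ_G) = (τ₁, τ₂ − τ₁) admitting a purely imaginary characteristic root iω with ω > 0 is a union of lines on which τ_I + τ_G is constant (lines of slope −1 in the (τ_I, τ_G)-plane), the constants differing by integer multiples of 2π/ω₀. -/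
open Complex

theorem chi_zero_I_mul (α₀ α₁ β₂ τ₁ τ₂ ω : ℝ) :
    chi α₀ α₁ 0 β₂ τ₁ τ₂ (I * ω) =
      β₂ * exp (-(I * ω) * τ₂) - (((ω ^ 2 - α₀ : ℝ) : ℂ) - I * ((α₁ * ω : ℝ) : ℂ)) := by
  simp only [chi]
  push_cast
  linear_combination (ω : ℂ) ^ 2 * I_sq

theorem sq_add_sq_eq_sq_of_ofReal_mul_exp_eq {β ω τ a b : ℝ}
    (h : (β : ℂ) * exp (-(I * ω) * τ) = a - I * b) : a ^ 2 + b ^ 2 = β ^ 2 := by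
  have hexp : exp (-(I * ω) * τ) = exp (I * ↑(-(ω * τ))) := by push_cast; ring_nf
  have hsub : (a : ℂ) - I * b = a + ↑(-b) * I := by push_cast; ring
  have := congrArg normSq h
  rwa [hexp, hsub, normSq_mul, normSq_ofReal, normSq_add_mul_I, ← Complex.sq_norm,
    norm_exp_I_mul_ofReal, one_pow, mul_one, neg_sq, ← sq, eq_comm] at this

theorem exists_int_eq_add_mul_of_exp_neg_I_mul_eq {ω τ τ' : ℝ} (hω : ω ≠ 0)
    (h : exp (-(I * ω) * τ') = exp (-(I * ω) * τ)) :
    ∃ n : ℤ, τ' = τ + n * (2 * Real.pi / ω) := by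
  obtain ⟨n, hn⟩ := exp_eq_exp_iff_exists_int.1 h
  have him := congrArg im hn
  simp only [neg_mul, neg_im, mul_im, I_re, ofReal_re, zero_mul, I_im, ofReal_im, mul_zero,
    sub_zero, one_mul, add_im, intCast_re, mul_re, re_ofNat, im_ofNat, intCast_im] at him
  refine ⟨-n, ?_⟩
  field_simp
  push_cast
  linear_combination -him

theorem stmt6_general (α₀ α₁ β₁ β₂ ω₀ : ℝ) (hβ₁ : β₁ = 0) (hβ₂ : |α₀| < β₂)
    (hω₀ : 0 < ω₀)
    (huniq : ∀ ω : ℝ, 0 < ω →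
      (ω ^ 2 - α₀) ^ 2 + α₁ ^ 2 * ω ^ 2 = β₂ ^ 2 → ω = ω₀) :
    (∀ ω : ℝ, 0 < ω → ∀ τ₁ τ₂ : ℝ,
      (chi α₀ α₁ β₁ β₂ τ₁ τ₂ (Complex.I * (ω : ℂ)) = 0 ↔
        ω = ω₀ ∧ (β₂ : ℂ) * Complex.exp (-(Complex.I * (ω₀ : ℂ)) * (τ₂ : ℂ)) =
          ((ω₀ ^ 2 - α₀ : ℝ) : ℂ) - Complex.I * ((α₁ * ω₀ : ℝ) : ℂ))) ∧
    (∀ τ₂ τ₂' : ℝ,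
      (β₂ : ℂ) * Complex.exp (-(Complex.I * (ω₀ : ℂ)) * (τ₂ : ℂ)) =
        ((ω₀ ^ 2 - α₀ : ℝ) : ℂ) - Complex.I * ((α₁ * ω₀ : ℝ) : ℂ) →
      (β₂ : ℂ) * Complex.exp (-(Complex.I * (ω₀ : ℂ)) * (τ₂' : ℂ)) =
        ((ω₀ ^ 2 - α₀ : ℝ) : ℂ) - Complex.I * ((α₁ * ω₀ : ℝ) : ℂ) →
      ∃ n : ℤ, τ₂' = τ₂ + n * (2 * Real.pi / ω₀)) := by
  subst hβ₁
  have hβ₂_ne : (β₂ : ℂ) ≠ 0 := ofReal_ne_zero.2 ((abs_nonneg α₀).trans_lt hβ₂).ne'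
  refine ⟨fun ω hω τ₁ τ₂ => ?_, fun τ₂ τ₂' h h' => ?_⟩
  · rw [chi_zero_I_mul, sub_eq_zero]
    constructor
    · intro h
      obtain rfl := huniq ω hω (by simpa [mul_pow] using sq_add_sq_eq_sq_of_ofReal_mul_exp_eq h)
      exact ⟨rfl, h⟩
    · rintro ⟨rfl, h⟩
      exact h
  · exact exists_int_eq_add_mul_of_exp_neg_I_mul_eq hω₀.ne'
      (mul_left_cancel₀ hβ₂_ne (h'.trans h.symm))

/-- Zeroth-order limit `β₁ = 0` of the small-`β₁` perturbation analysis: with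
`β₂ > |α₀|` and `ω₀` the unique positive solution of `(ω² − α₀)² + α₁²ω² = β₂²`,
a purely imaginary root `χ(iω) = 0` with `ω > 0` occurs if and only if `ω = ω₀` and
`β₂·exp(−iω₀τ₂) = (ω₀² − α₀) − iα₁ω₀`; the condition is independent of `τ₁` and depends
only on `τ₂ = τ_I + τ_G`, and any two admissible values of `τ₂` differ by an integer
multiple of `2π/ω₀` (lines of slope `−1` in the `(τ_I, τ_G)`-plane). -/
theorem stmt6 (α₀ α₁ β₁ β₂ ω₀ : ℝ) (hβ₁ : β₁ = 0) (hβ₂ : |α₀| < β₂)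
    (hω₀ : 0 < ω₀) (heq : (ω₀ ^ 2 - α₀) ^ 2 + α₁ ^ 2 * ω₀ ^ 2 = β₂ ^ 2)
    (huniq : ∀ ω : ℝ, 0 < ω →
      (ω ^ 2 - α₀) ^ 2 + α₁ ^ 2 * ω ^ 2 = β₂ ^ 2 → ω = ω₀) :
    (∀ ω : ℝ, 0 < ω → ∀ τ₁ τ₂ : ℝ,
      (chi α₀ α₁ β₁ β₂ τ₁ τ₂ (Complex.I * (ω : ℂ)) = 0 ↔
        ω = ω₀ ∧ (β₂ : ℂ) * Complex.exp (-(Complex.I * (ω₀ : ℂ)) * (τ₂ : ℂ)) =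
          ((ω₀ ^ 2 - α₀ : ℝ) : ℂ) - Complex.I * ((α₁ * ω₀ : ℝ) : ℂ))) ∧
    (∀ τ₂ τ₂' : ℝ,
      (β₂ : ℂ) * Complex.exp (-(Complex.I * (ω₀ : ℂ)) * (τ₂ : ℂ)) =
        ((ω₀ ^ 2 - α₀ : ℝ) : ℂ) - Complex.I * ((α₁ * ω₀ : ℝ) : ℂ) →
      (β₂ : ℂ) * Complex.exp (-(Complex.I * (ω₀ : ℂ)) * (τ₂' : ℂ)) =
        ((ω₀ ^ 2 - α₀ : ℝ) : ℂ) - Complex.I * ((α₁ * ω₀ : ℝ) : ℂ) →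
      ∃ n : ℤ, τ₂' = τ₂ + n * (2 * Real.pi / ω₀)) :=
  stmt6_general α₀ α₁ β₁ β₂ ω₀ hβ₁ hβ₂ hω₀ huniq
end

section
/- Define, for G > 0 and I > 0 (real powers): f₁(G) = 210·G²/(G² + 60000²); f₂(G) = 72·G^{1.8}/(G^{1.8} + 1035^{1.8}); f₃(G) = G/10000; f₄(I) = 40 + 900·I^{1.5}/(I^{1.5} + ((1/11 + 1/20)^{−1}·80)^{1.5}); f₅(I) = 180·I^{−8.54}/(I^{−8.54} + (3·26.7)^{−8.54}); and let d = 0.06. Then for every constant G_in ≥ 0 there exists a unique G* > 0 such that G_in − f₂(G*) − f₃(G*)·f₄(f₁(G*)/d) + f₅(f₁(G*)/d) = 0. Consequently, with I* := f₁(G*)/d, the pair (G*, I*) is the unique equilibrium with positive coordinates of the glucose–insulin system G' = G_in − f₂(G) − f₃(G)f₄(I) + f₅(I(t−τ_G)), I' = f₁(G(t−τ_I)) − dI (at an equilibrium all delayed arguments coincide with the equilibrium values, independently of τ_I, τ_G). -/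
/-- Insulin production pathway `f₁(G) = R_m G^{h₁}/(G^{h₁} + (V_g k₁)^{h₁})`. -/
noncomputable def f₁ (G : ℝ) : ℝ := 210 * G ^ 2 / (G ^ 2 + 60000 ^ 2)

/-- Insulin-independent glucose utilization `f₂`. -/
noncomputable def f₂ (G : ℝ) : ℝ :=
  72 * G ^ (1.8 : ℝ) / (G ^ (1.8 : ℝ) + (1035 : ℝ) ^ (1.8 : ℝ))

/-- Insulin-dependent glucose utilization factor `f₃(G) = G/(C₃ V_g)`. -/
noncomputable def f₃ (G : ℝ) : ℝ := G / 10000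

/-- Insulin-dependent glucose utilization factor `f₄`. -/
noncomputable def f₄ (I : ℝ) : ℝ :=
  40 + 900 * I ^ (1.5 : ℝ) /
    (I ^ (1.5 : ℝ) + ((1 / 11 + 1 / 20 : ℝ)⁻¹ * 80) ^ (1.5 : ℝ))

/-- Hepatic glucose production `f₅` (Hill exponent `h₅ = −8.54`). -/
noncomputable def f₅ (I : ℝ) : ℝ :=
  180 * I ^ (-8.54 : ℝ) / (I ^ (-8.54 : ℝ) + ((3 : ℝ) * 26.7) ^ (-8.54 : ℝ))

/-
With `I = f₁(G)/d` the equilibrium conditions collapse to one equation `F(G) = 0` in `G`.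
For `G > 0` the utilization terms `f₂(G)` and `f₃(G) f₄(I)` increase with `G` while hepatic
production `f₅(I)` decreases (its Hill exponent is negative), so `F` is strictly decreasing and
has at most one zero. It has one by the intermediate value theorem: at `G = 1` the insulin level
is tiny, so `f₅ > 90` exceeds the utilization `< 72 + 940/10000`, while
`F(G) ≤ G_in + 180 - 40 G / 10000` becomes negative for large `G`.
-/

open Set Real

noncomputable def hill (c x : ℝ) : ℝ := x / (x + c)

section Hill

variable {c : ℝ}

lemma hill_nonneg (hc : 0 < c) {x : ℝ} (hx : 0 ≤ x) : 0 ≤ hill c x :=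
  div_nonneg hx (by linarith)

lemma hill_lt_one (hc : 0 < c) {x : ℝ} (hx : 0 ≤ x) : hill c x < 1 := by
  rw [hill, div_lt_one (by linarith)]
  linarith

lemma one_half_lt_hill (hc : 0 < c) {x : ℝ} (hcx : c < x) : 1 / 2 < hill c x := by
  rw [hill, lt_div_iff₀ (by linarith)]
  linarith

lemma hill_strictMonoOn (hc : 0 < c) : StrictMonoOn (hill c) (Ici 0) := by
  intro x hx y hy hxy
  rw [hill, hill, div_lt_div_iff₀ (by linarith [mem_Ici.1 hx]) (by linarith [mem_Ici.1 hy])]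
  nlinarith

lemma continuousOn_hill (hc : 0 < c) : ContinuousOn (hill c) (Ici 0) :=
  continuousOn_id.div (continuousOn_id.add continuousOn_const) fun x hx =>
    (by linarith [mem_Ici.1 hx] : 0 < x + c).ne'

lemma continuousOn_hill_rpow (hc : 0 < c) (h : ℝ) :
    ContinuousOn (fun x => hill c (x ^ h)) (Ioi 0) :=
  (continuousOn_hill hc).comp (continuousOn_id.rpow_const fun _ hx => Or.inl (ne_of_gt hx))
    fun _ hx => rpow_nonneg (le_of_lt hx) h

lemma hill_rpow_strictMonoOn (hc : 0 < c) {h : ℝ} (hh : 0 < h) :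
    StrictMonoOn (fun x => hill c (x ^ h)) (Ioi 0) :=
  (hill_strictMonoOn hc).comp
    ((strictMonoOn_rpow_Ici_of_exponent_pos hh).mono Ioi_subset_Ici_self)
    fun _ hx => rpow_nonneg (le_of_lt hx) h

lemma hill_rpow_strictAntiOn (hc : 0 < c) {h : ℝ} (hh : h < 0) :
    StrictAntiOn (fun x => hill c (x ^ h)) (Ioi 0) :=
  (hill_strictMonoOn hc).comp_strictAntiOn (strictAntiOn_rpow_Ioi_of_exponent_neg hh)
    fun _ hx => rpow_nonneg (le_of_lt hx) h

end Hill

lemma existsUnique_eq_of_strictAntiOn {f : ℝ → ℝ} {s : Set ℝ} {a b y : ℝ}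
    (hs : s.OrdConnected) (hf : StrictAntiOn f s) (hfc : ContinuousOn f s)
    (ha : a ∈ s) (hb : b ∈ s) (hab : a ≤ b) (hfa : y ≤ f a) (hfb : f b ≤ y) :
    ∃! x, x ∈ s ∧ f x = y := by
  obtain ⟨x, hx, hfx⟩ := intermediate_value_Icc' hab (hfc.mono (hs.out ha hb)) ⟨hfb, hfa⟩
  exact ⟨x, ⟨hs.out ha hb hx, hfx⟩,
    fun x' hx' => hf.injOn hx'.1 (hs.out ha hb hx) (hx'.2.trans hfx.symm)⟩

lemma f₁_eq_hill (G : ℝ) : f₁ G = 210 * hill (60000 ^ 2) (G ^ 2) :=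
  mul_div_assoc _ _ _

lemma f₂_eq_hill (G : ℝ) : f₂ G = 72 * hill ((1035 : ℝ) ^ (1.8 : ℝ)) (G ^ (1.8 : ℝ)) :=
  mul_div_assoc _ _ _

lemma f₄_eq_hill (I : ℝ) :
    f₄ I = 40 + 900 * hill (((1 / 11 + 1 / 20 : ℝ)⁻¹ * 80) ^ (1.5 : ℝ)) (I ^ (1.5 : ℝ)) := by
  rw [f₄, mul_div_assoc, hill]

lemma f₅_eq_hill (I : ℝ) : f₅ I = 180 * hill (((3 : ℝ) * 26.7) ^ (-8.54 : ℝ)) (I ^ (-8.54 : ℝ)) :=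
  mul_div_assoc _ _ _

lemma f₁_pos {G : ℝ} (hG : 0 < G) : 0 < f₁ G := by
  unfold f₁
  positivity

lemma f₁_strictMonoOn : StrictMonoOn f₁ (Ici 0) := by
  intro x hx y hy hxy
  rw [f₁_eq_hill, f₁_eq_hill]
  gcongr 210 * ?_
  exact hill_strictMonoOn (by norm_num) (sq_nonneg x) (sq_nonneg y)
    (pow_lt_pow_left₀ hxy hx two_ne_zero)

lemma continuous_f₁ : Continuous f₁ := by
  rw [funext f₁_eq_hill]
  exact continuous_const.mul
    ((continuousOn_hill (by norm_num)).comp_continuous (continuous_pow 2) sq_nonneg)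

lemma f₂_nonneg {G : ℝ} (hG : 0 ≤ G) : 0 ≤ f₂ G := by
  rw [f₂_eq_hill]
  exact mul_nonneg (by norm_num) (hill_nonneg (by positivity) (rpow_nonneg hG _))

lemma f₂_lt {G : ℝ} (hG : 0 ≤ G) : f₂ G < 72 := by
  rw [f₂_eq_hill]
  linarith [hill_lt_one (c := (1035 : ℝ) ^ (1.8 : ℝ)) (by positivity) (rpow_nonneg hG 1.8)]

lemma f₂_strictMonoOn : StrictMonoOn f₂ (Ioi 0) := by
  intro x hx y hy hxy
  rw [f₂_eq_hill, f₂_eq_hill]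
  gcongr 72 * ?_
  exact hill_rpow_strictMonoOn (by positivity) (by norm_num) hx hy hxy

lemma continuousOn_f₂ : ContinuousOn f₂ (Ioi 0) := by
  rw [funext f₂_eq_hill]
  exact continuousOn_const.mul (continuousOn_hill_rpow (by positivity) _)

lemma le_f₄ {I : ℝ} (hI : 0 ≤ I) : 40 ≤ f₄ I := by
  rw [f₄_eq_hill]
  have := hill_nonneg (c := ((1 / 11 + 1 / 20 : ℝ)⁻¹ * 80) ^ (1.5 : ℝ)) (by positivity)
    (rpow_nonneg hI 1.5)
  linarith

lemma f₄_lt {I : ℝ} (hI : 0 ≤ I) : f₄ I < 940 := by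
  rw [f₄_eq_hill]
  have := hill_lt_one (c := ((1 / 11 + 1 / 20 : ℝ)⁻¹ * 80) ^ (1.5 : ℝ)) (by positivity)
    (rpow_nonneg hI 1.5)
  linarith

lemma f₄_strictMonoOn : StrictMonoOn f₄ (Ioi 0) := by
  intro x hx y hy hxy
  rw [f₄_eq_hill, f₄_eq_hill]
  gcongr 40 + 900 * ?_
  exact hill_rpow_strictMonoOn (by positivity) (by norm_num) hx hy hxy

lemma continuousOn_f₄ : ContinuousOn f₄ (Ioi 0) := by
  rw [funext f₄_eq_hill]
  exact continuousOn_const.add (continuousOn_const.mul (continuousOn_hill_rpow (by positivity) _))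

lemma f₅_le {I : ℝ} (hI : 0 ≤ I) : f₅ I ≤ 180 := by
  rw [f₅_eq_hill]
  have := hill_lt_one (c := ((3 : ℝ) * 26.7) ^ (-8.54 : ℝ)) (by positivity) (rpow_nonneg hI (-8.54))
  linarith

lemma lt_f₅ {I : ℝ} (hI : 0 < I) (hI' : I < 3 * 26.7) : 90 < f₅ I := by
  rw [f₅_eq_hill]
  have := one_half_lt_hill (c := ((3 : ℝ) * 26.7) ^ (-8.54 : ℝ)) (by positivity)
    (rpow_lt_rpow_of_neg hI hI' (by norm_num))
  linarith

lemma f₅_strictAntiOn : StrictAntiOn f₅ (Ioi 0) := by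
  intro x hx y hy hxy
  rw [f₅_eq_hill, f₅_eq_hill]
  gcongr 180 * ?_
  exact hill_rpow_strictAntiOn (by positivity) (by norm_num) hx hy hxy

lemma continuousOn_f₅ : ContinuousOn f₅ (Ioi 0) := by
  rw [funext f₅_eq_hill]
  exact continuousOn_const.mul (continuousOn_hill_rpow (by positivity) _)

noncomputable def glucoseBalance (Gin G : ℝ) : ℝ :=
  Gin - f₂ G - f₃ G * f₄ (f₁ G / 0.06) + f₅ (f₁ G / 0.06)

section glucoseBalance

variable {Gin : ℝ}

lemma glucoseBalance_strictAntiOn : StrictAntiOn (glucoseBalance Gin) (Ioi 0) := by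
  intro x hx y hy hxy
  have hIx : 0 < f₁ x / 0.06 := div_pos (f₁_pos hx) (by norm_num)
  have hIxy : f₁ x / 0.06 ≤ f₁ y / 0.06 := by
    gcongr
    exact f₁_strictMonoOn.monotoneOn (mem_Ici_of_Ioi hx) (mem_Ici_of_Ioi hy) hxy.le
  have hIy : 0 < f₁ y / 0.06 := hIx.trans_le hIxy
  have h₃₄ : f₃ x * f₄ (f₁ x / 0.06) ≤ f₃ y * f₄ (f₁ y / 0.06) :=
    mul_le_mul (div_le_div_of_nonneg_right hxy.le (by norm_num))
      (f₄_strictMonoOn.monotoneOn hIx hIy hIxy) (by linarith [le_f₄ hIx.le])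
      (div_nonneg (le_of_lt hy) (by norm_num))
  have h₂ := f₂_strictMonoOn hx hy hxy
  have h₅ := f₅_strictAntiOn.antitoneOn hIx hIy hIxy
  unfold glucoseBalance
  linarith

lemma continuousOn_glucoseBalance : ContinuousOn (glucoseBalance Gin) (Ioi 0) := by
  have hI : ContinuousOn (fun G => f₁ G / 0.06) (Ioi 0) :=
    (continuous_f₁.div_const _).continuousOn
  have hIpos : MapsTo (fun G => f₁ G / 0.06) (Ioi 0) (Ioi 0) :=
    fun G hG => div_pos (f₁_pos hG) (by norm_num)
  have hf₃ : ContinuousOn f₃ (Ioi 0) := (continuous_id.div_const _).continuousOn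
  exact ((continuousOn_const.sub continuousOn_f₂).sub
    (hf₃.mul (continuousOn_f₄.comp hI hIpos))).add (continuousOn_f₅.comp hI hIpos)

lemma glucoseBalance_le {G : ℝ} (hG : 0 ≤ G) : glucoseBalance Gin G ≤ Gin + 180 - G / 250 := by
  have hI : 0 ≤ f₁ G / 0.06 := div_nonneg (by unfold f₁; positivity) (by norm_num)
  have h₃₄ : G / 10000 * 40 ≤ f₃ G * f₄ (f₁ G / 0.06) :=
    mul_le_mul_of_nonneg_left (le_f₄ hI) (by positivity)
  have := f₂_nonneg hG
  have := f₅_le hI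
  unfold glucoseBalance
  linarith

lemma glucoseBalance_one_pos (hGin : 0 ≤ Gin) : 0 < glucoseBalance Gin 1 := by
  have hI : 0 < f₁ 1 / 0.06 := div_pos (f₁_pos one_pos) (by norm_num)
  have hI' : f₁ 1 / 0.06 < 3 * 26.7 := by norm_num [f₁]
  have := f₂_lt zero_le_one
  have := f₄_lt hI.le
  have := lt_f₅ hI hI'
  unfold glucoseBalance f₃
  linarith

end glucoseBalance

/-- For every constant glucose infusion `G_in ≥ 0` there is a unique `G* > 0` with
`G_in − f₂(G*) − f₃(G*)f₄(f₁(G*)/d) + f₅(f₁(G*)/d) = 0` (with `d = 0.06`); consequently,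
with `I* = f₁(G*)/d`, the pair `(G*, I*)` is the unique equilibrium with positive
coordinates of the glucose–insulin system, independently of the delays. -/
theorem stmt8 (Gin : ℝ) (hGin : 0 ≤ Gin) :
    (∃! G : ℝ, 0 < G ∧
      Gin - f₂ G - f₃ G * f₄ (f₁ G / 0.06) + f₅ (f₁ G / 0.06) = 0) ∧
    (∃! p : ℝ × ℝ, (0 < p.1 ∧ 0 < p.2) ∧
      Gin - f₂ p.1 - f₃ p.1 * f₄ p.2 + f₅ p.2 = 0 ∧
      f₁ p.1 - 0.06 * p.2 = 0) := by
  have hroot : ∃! G : ℝ, 0 < G ∧ glucoseBalance Gin G = 0 := by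
    have hb : (1 : ℝ) ≤ 250 * (Gin + 180) := by linarith
    refine existsUnique_eq_of_strictAntiOn ordConnected_Ioi glucoseBalance_strictAntiOn
      continuousOn_glucoseBalance (mem_Ioi.2 one_pos) (mem_Ioi.2 (by linarith)) hb
      (glucoseBalance_one_pos hGin).le ?_
    linarith [glucoseBalance_le (Gin := Gin) (by linarith : (0 : ℝ) ≤ 250 * (Gin + 180))]
  refine ⟨hroot, ?_⟩
  obtain ⟨G, ⟨hG, hbal⟩, huniq⟩ := hroot
  refine ⟨(G, f₁ G / 0.06), ⟨⟨hG, div_pos (f₁_pos hG) (by norm_num)⟩, hbal, by ring⟩, ?_⟩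
  rintro ⟨G', I'⟩ ⟨⟨hG', -⟩, hbal', hI'⟩
  obtain rfl : I' = f₁ G' / 0.06 := by
    field_simp
    linarith
  obtain rfl := huniq G' ⟨hG', hbal'⟩
  rfl
end

section
/- Let α₀, α₁ ∈ ℝ and β₁, β₂ > 0 with β₂ > |α₀| and β₁ ≤ 2β₂. Then there exist a frequency ω > 0 and nonnegative delays τ₁ ≥ 0, τ₂ ≥ 0 such that χ(iω) = 0; i.e., the critical (Hopf) curve of the two-delay system is nonempty in the closed positive quadrant of the (τ₁, τ₂)-plane. -/
/-!
At `λ = iω` the equation `χ(iω) = 0` says `β₁ u₁ + β₂ u₂ = -q(iω)`, where `q(λ) = λ² + α₁λ + α₀`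
and `u_j = exp(-iωτ_j)`; for `ω > 0` every unit complex number is such an exponential with
`τ_j ≥ 0`. Sums `β₁ u₁ + β₂ u₂` of unit vectors fill the annulus `|β₁ - β₂| ≤ |z| ≤ β₁ + β₂`
(law of cosines). Since `|q(0)| = |α₀| < β₂` and `|q(iω)|` is unbounded, the intermediate value
theorem gives `ω > 0` with `|q(iω)| = β₂`, and `β₁ ≤ 2β₂` puts `β₂` in the annulus.
-/

open Complex

lemma Complex.exists_nonneg_exp_neg_I_mul_mul_eq {ω : ℝ} (hω : 0 < ω) {u : ℂ} (hu : ‖u‖ = 1) :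
    ∃ τ : ℝ, 0 ≤ τ ∧ exp (-(I * ω) * τ) = u := by
  refine ⟨(2 * Real.pi - arg u) / ω, div_nonneg (by linarith [arg_le_pi u, Real.pi_pos]) hω.le, ?_⟩
  have hω' : (ω : ℂ) ≠ 0 := ofReal_ne_zero.mpr hω.ne'
  have hexp : -(I * ω) * (((2 * Real.pi - arg u) / ω : ℝ) : ℂ) =
      arg u * I - 2 * Real.pi * I := by
    push_cast
    field_simp
    ring
  rw [hexp, exp_sub, exp_two_pi_mul_I, div_one]
  simpa [hu] using norm_mul_exp_arg_mul_I u

lemma Complex.norm_ofReal_sub_mul_exp_mul_I_sq (r a γ : ℝ) :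
    ‖(r : ℂ) - a * exp (γ * I)‖ ^ 2 = r ^ 2 + a ^ 2 - 2 * a * r * Real.cos γ := by
  rw [← normSq_eq_norm_sq, normSq_apply]
  simp only [sub_re, sub_im, ofReal_re, ofReal_im, re_ofReal_mul, im_ofReal_mul,
    exp_ofReal_mul_I_re, exp_ofReal_mul_I_im]
  nlinarith [Real.sin_sq_add_cos_sq γ]

lemma Complex.exists_norm_eq_one_mul_add_mul_eq {a b : ℝ} (ha : 0 ≤ a) (hb : 0 ≤ b) {z : ℂ}
    (h₁ : |a - b| ≤ ‖z‖) (h₂ : ‖z‖ ≤ a + b) :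
    ∃ u v : ℂ, ‖u‖ = 1 ∧ ‖v‖ = 1 ∧ a * u + b * v = z := by
  set r := ‖z‖
  set γ := Real.arccos ((r ^ 2 + a ^ 2 - b ^ 2) / (2 * a * r))
  have hcos : 2 * a * r * Real.cos γ = r ^ 2 + a ^ 2 - b ^ 2 := by
    obtain ⟨hab, hba⟩ := abs_sub_le_iff.mp h₁
    -- if `a * r = 0` the `arccos` argument is a junk `x / 0`, but then `a = b` or `r = b`
    rcases (mul_nonneg ha (norm_nonneg z) : 0 ≤ a * r).eq_or_lt with har | har
    · rcases mul_eq_zero.mp har.symm with h | h <;> rw [h] at hab hba h₂ ⊢ <;> nlinarith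
    · have h2ar : 0 < 2 * a * r := by linarith
      rw [Real.cos_arccos, mul_div_cancel₀ _ h2ar.ne']
      · rw [le_div_iff₀ h2ar]; nlinarith
      · rw [div_le_one h2ar]; nlinarith
  set e := exp (arg z * I)
  set w := z - a * (e * exp (γ * I))
  have hw : ‖w‖ = b := by
    have : w = e * (r - a * exp (γ * I)) := by
      have hz : (r : ℂ) * e = z := norm_mul_exp_arg_mul_I z
      rw [show w = z - a * (e * exp (γ * I)) from rfl, ← hz]
      ring
    rw [this, norm_mul, norm_exp_ofReal_mul_I, one_mul]
    refine (sq_eq_sq₀ (norm_nonneg _) hb).mp ?_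
    rw [norm_ofReal_sub_mul_exp_mul_I_sq]
    linarith
  refine ⟨e * exp (γ * I), exp (arg w * I), by simp [e], norm_exp_ofReal_mul_I _, ?_⟩
  rw [← hw, norm_mul_exp_arg_mul_I]
  ring

lemma exists_pos_norm_quadratic_at_I_mul_eq (α₀ α₁ : ℝ) {c : ℝ} (hc : |α₀| < c) :
    ∃ ω : ℝ, 0 < ω ∧ ‖(I * ω) ^ 2 + α₁ * (I * ω) + α₀‖ = c := by
  set p : ℝ → ℝ := fun ω => ‖(I * ω) ^ 2 + α₁ * (I * ω) + α₀‖
  have hp0 : p 0 = |α₀| := by simp [p]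
  set M := √(c + α₀)
  have hpM : c ≤ p M := by
    have hM : M ^ 2 = c + α₀ := Real.sq_sqrt (by linarith [neg_abs_le α₀])
    calc c = |((I * M) ^ 2 + α₁ * (I * M) + α₀ : ℂ).re| := by
          simp only [sq] at hM
          simp [sq, hM, abs_of_pos (abs_nonneg α₀ |>.trans_lt hc)]
      _ ≤ p M := abs_re_le_norm _
  obtain ⟨ω, hωM, hω⟩ := intermediate_value_Icc (Real.sqrt_nonneg _)
    (by fun_prop : Continuous p).continuousOn ⟨hp0 ▸ hc.le, hpM⟩
  refine ⟨ω, hωM.1.lt_of_ne ?_, hω⟩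
  rintro rfl
  exact hc.ne (hp0 ▸ hω)

theorem stmt10_general (α₀ α₁ β₁ β₂ : ℝ) (hβ₁ : 0 < β₁)
    (h₁ : |α₀| < β₂) (h₂ : β₁ ≤ 2 * β₂) :
    ∃ ω τ₁ τ₂ : ℝ, 0 < ω ∧ 0 ≤ τ₁ ∧ 0 ≤ τ₂ ∧
      chi α₀ α₁ β₁ β₂ τ₁ τ₂ (Complex.I * (ω : ℂ)) = 0 := by
  have hβ₂ : 0 ≤ β₂ := (abs_nonneg α₀).trans h₁.le
  obtain ⟨ω, hω, hq⟩ := exists_pos_norm_quadratic_at_I_mul_eq α₀ α₁ h₁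
  obtain ⟨u, v, hu, hv, huv⟩ := exists_norm_eq_one_mul_add_mul_eq hβ₁.le hβ₂
    (z := -((I * ω) ^ 2 + α₁ * (I * ω) + α₀))
    (by rw [norm_neg, hq, abs_le]; constructor <;> linarith)
    (by rw [norm_neg, hq]; linarith)
  obtain ⟨τ₁, hτ₁, rfl⟩ := exists_nonneg_exp_neg_I_mul_mul_eq hω hu
  obtain ⟨τ₂, hτ₂, rfl⟩ := exists_nonneg_exp_neg_I_mul_mul_eq hω hv
  refine ⟨ω, τ₁, τ₂, hω, hτ₁, hτ₂, ?_⟩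
  rw [chi]
  linear_combination huv

/-- If `β₁, β₂ > 0`, `β₂ > |α₀|` and `β₁ ≤ 2β₂`, then there exist a frequency `ω > 0`
and nonnegative delays `τ₁ ≥ 0`, `τ₂ ≥ 0` with `χ(iω) = 0`: the critical (Hopf) curve is
nonempty in the closed positive quadrant of the `(τ₁, τ₂)`-plane. -/
theorem stmt10 (α₀ α₁ β₁ β₂ : ℝ) (hβ₁ : 0 < β₁) (hβ₂ : 0 < β₂)
    (h₁ : |α₀| < β₂) (h₂ : β₁ ≤ 2 * β₂) :
    ∃ ω τ₁ τ₂ : ℝ, 0 < ω ∧ 0 ≤ τ₁ ∧ 0 ≤ τ₂ ∧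
      chi α₀ α₁ β₁ β₂ τ₁ τ₂ (Complex.I * (ω : ℂ)) = 0 :=
  stmt10_general α₀ α₁ β₁ β₂ hβ₁ h₁ h₂
end

section
/- Let z ∈ ℂ with z ≠ 0 and let β₁, β₂ > 0 satisfy the strict triangle inequalities |β₁ − β₂| < |z| < β₁ + β₂. Then the set of pairs (u, v) of complex numbers with |u| = 1, |v| = 1 and β₁u + β₂v = z has exactly two elements, and the two solution pairs are mapped to each other by reflection across the direction of z (i.e., (u, v) ↦ ((z/|z|)²·conj(u), (z/|z|)²·conj(v))). Consequently, for a fixed Hopf frequency ω > 0 in this regime, the delay pairs (τ₁, τ₂) solving χ(iω) = 0 form, modulo 2π/ω in each component, exactly two branches. -/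
open Complex ComplexConjugate Real Pointwise

lemma Complex.eq_or_eq_conj_of_norm_eq_of_re_eq {u w : ℂ} (hn : ‖u‖ = ‖w‖)
    (hre : u.re = w.re) : u = w ∨ u = conj w := by
  have him : u.im ^ 2 = w.im ^ 2 := by
    have := congrArg (· ^ 2) hn
    simp only [← normSq_eq_norm_sq, normSq_apply, hre] at this
    nlinarith
  rcases sq_eq_sq_iff_eq_or_eq_neg.mp him with h | h
  · exact .inl (Complex.ext hre h)
  · exact .inr (Complex.ext (by simpa using hre) (by simpa using h))

lemma Complex.normSq_ofReal_sub_ofReal_mul (r β : ℝ) (w : ℂ) :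
    normSq (r - β * w) = r ^ 2 - 2 * r * β * w.re + β ^ 2 * normSq w := by
  simp only [normSq_apply, sub_re, sub_im, mul_re, mul_im, ofReal_re, ofReal_im]
  ring

lemma Complex.sq_mul_conj_mul_of_norm_eq_one {d : ℂ} (hd : ‖d‖ = 1) (x : ℂ) :
    d ^ 2 * (conj d * x) = d * x := by
  have hdd : d * conj d = 1 := by
    rw [mul_conj, normSq_eq_norm_sq, hd]; norm_num
  linear_combination d * x * hdd

lemma pos_of_abs_sub_lt_of_lt_add {β₁ β₂ r : ℝ} (h₁ : |β₁ - β₂| < r) (h₂ : r < β₁ + β₂) :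
    0 < r ∧ 0 < β₁ ∧ 0 < β₂ := by
  obtain ⟨hlo, hhi⟩ := abs_lt.mp h₁
  exact ⟨by linarith, by linarith, by linarith⟩

section UnitSolutions

variable {β₁ β₂ : ℝ}

def unitSolutions (β₁ β₂ : ℝ) (z : ℂ) : Set (ℂ × ℂ) :=
  {w | ‖w.1‖ = 1 ∧ ‖w.2‖ = 1 ∧ (β₁ : ℂ) * w.1 + (β₂ : ℂ) * w.2 = z}

lemma smul_mem_unitSolutions_mul_iff {d z : ℂ} {p : ℂ × ℂ} (hd : ‖d‖ = 1) :
    d • p ∈ unitSolutions β₁ β₂ (d * z) ↔ p ∈ unitSolutions β₁ β₂ z := by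
  have hd0 : d ≠ 0 := by rintro rfl; simp at hd
  simp only [unitSolutions, Set.mem_ofPred_eq, Prod.smul_fst, Prod.smul_snd, smul_eq_mul,
    norm_mul, hd, one_mul]
  rw [show (β₁ : ℂ) * (d * p.1) + β₂ * (d * p.2) = d * (β₁ * p.1 + β₂ * p.2) by ring,
    mul_right_inj' hd0]

lemma unitSolutions_mul {d : ℂ} (hd : ‖d‖ = 1) (z : ℂ) :
    unitSolutions β₁ β₂ (d * z) = d • unitSolutions β₁ β₂ z := by
  have hd0 : d ≠ 0 := by rintro rfl; simp at hd
  ext p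
  rw [Set.mem_smul_set_iff_inv_smul_mem₀ hd0, ← smul_mem_unitSolutions_mul_iff (z := z) hd,
    smul_inv_smul₀ hd0]

lemma star_mem_unitSolutions {z : ℂ} {p : ℂ × ℂ} (hp : p ∈ unitSolutions β₁ β₂ z) :
    star p ∈ unitSolutions β₁ β₂ (conj z) := by
  obtain ⟨h₁, h₂, h⟩ := hp
  refine ⟨by simpa using h₁, by simpa using h₂, ?_⟩
  simp [← h]

lemma eq_of_mem_unitSolutions_of_fst_eq (hβ₂ : β₂ ≠ 0) {z : ℂ} {p q : ℂ × ℂ}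
    (hp : p ∈ unitSolutions β₁ β₂ z) (hq : q ∈ unitSolutions β₁ β₂ z) (h : p.1 = q.1) :
    p = q := by
  refine Prod.ext h (mul_left_cancel₀ (ofReal_ne_zero.mpr hβ₂) ?_)
  linear_combination hp.2.2 - hq.2.2 - (β₁ : ℂ) * h

lemma re_of_mem_unitSolutions_ofReal {r : ℝ} {p : ℂ × ℂ}
    (hp : p ∈ unitSolutions β₁ β₂ r) : 2 * r * β₁ * p.1.re = r ^ 2 + β₁ ^ 2 - β₂ ^ 2 := by
  obtain ⟨h₁, h₂, h⟩ := hp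
  have hv : (β₂ : ℂ) * p.2 = r - β₁ * p.1 := by linear_combination h
  have := normSq_ofReal_sub_ofReal_mul r β₁ p.1
  rw [← hv, normSq_mul, normSq_ofReal, normSq_eq_norm_sq p.1, normSq_eq_norm_sq p.2, h₁,
    h₂] at this
  linarith

lemma exists_mem_unitSolutions_ofReal {r : ℝ} (h₁ : |β₁ - β₂| < r) (h₂ : r < β₁ + β₂) :
    ∃ p ∈ unitSolutions β₁ β₂ r, 0 < p.1.im := by
  obtain ⟨hr, hβ₁, hβ₂⟩ := pos_of_abs_sub_lt_of_lt_add h₁ h₂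
  obtain ⟨hlo, hhi⟩ := abs_lt.mp h₁
  set c := (r ^ 2 + β₁ ^ 2 - β₂ ^ 2) / (2 * r * β₁) with hc_def
  have hc : 2 * r * β₁ * c = r ^ 2 + β₁ ^ 2 - β₂ ^ 2 := by rw [hc_def]; field_simp
  have heron : (2 * r * β₁) ^ 2 * (1 - c ^ 2) =
      (β₁ + β₂ - r) * (r + β₂ - β₁) * (r + β₁ - β₂) * (r + β₁ + β₂) := by
    linear_combination (-(2 * r * β₁ * c) - (r ^ 2 + β₁ ^ 2 - β₂ ^ 2)) * hc
  have hc2 : 0 < 1 - c ^ 2 := by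
    refine pos_of_mul_pos_right (heron ▸ ?_) (sq_nonneg (2 * r * β₁))
    exact mul_pos (mul_pos (mul_pos (by linarith) (by linarith)) (by linarith)) (by linarith)
  set w : ℂ := ⟨c, √(1 - c ^ 2)⟩
  have hw : normSq w = 1 := by
    rw [normSq_apply, Real.mul_self_sqrt hc2.le]; ring
  have hv : ‖(r : ℂ) - β₁ * w‖ = β₂ := by
    rw [← pow_left_inj₀ (norm_nonneg _) hβ₂.le two_ne_zero, Complex.sq_norm,
      normSq_ofReal_sub_ofReal_mul, hw]
    linear_combination -hc
  refine ⟨(w, (r - β₁ * w) / β₂), ⟨?_, ?_, ?_⟩, Real.sqrt_pos.2 hc2⟩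
  · rw [norm_def, hw, Real.sqrt_one]
  · rw [norm_div, hv, norm_real, Real.norm_of_nonneg hβ₂.le, div_self hβ₂.ne']
  · have : (β₂ : ℂ) ≠ 0 := ofReal_ne_zero.2 hβ₂.ne'
    field_simp
    ring

lemma unitSolutions_ofReal_eq_pair {r : ℝ} (h₁ : |β₁ - β₂| < r) (h₂ : r < β₁ + β₂) :
    ∃ p, p ≠ star p ∧ unitSolutions β₁ β₂ r = {p, star p} := by
  obtain ⟨hr, hβ₁, hβ₂⟩ := pos_of_abs_sub_lt_of_lt_add h₁ h₂
  obtain ⟨p, hp, him⟩ := exists_mem_unitSolutions_ofReal h₁ h₂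
  have hp' : star p ∈ unitSolutions β₁ β₂ r := by simpa using star_mem_unitSolutions hp
  refine ⟨p, fun h => ?_, Set.Subset.antisymm (fun q hq => ?_) ?_⟩
  · have := congrArg (fun q : ℂ × ℂ => q.1.im) h
    simp at this
    linarith
  · have hre : q.1.re = p.1.re := mul_left_cancel₀ (by positivity)
      ((re_of_mem_unitSolutions_ofReal hq).trans (re_of_mem_unitSolutions_ofReal hp).symm)
    rcases eq_or_eq_conj_of_norm_eq_of_re_eq (hq.1.trans hp.1.symm) hre with h | h
    · exact .inl (eq_of_mem_unitSolutions_of_fst_eq hβ₂.ne' hq hp h)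
    · exact .inr (eq_of_mem_unitSolutions_of_fst_eq hβ₂.ne' hq hp' h)
  · rintro q (rfl | rfl) <;> assumption

end UnitSolutions

noncomputable def phaseFactor (ω t : ℝ) : ℂ := Complex.exp (-(I * ω) * t)

lemma norm_phaseFactor (ω t : ℝ) : ‖phaseFactor ω t‖ = 1 := by
  simp [phaseFactor, norm_exp]

lemma phaseFactor_eq_phaseFactor_iff {ω : ℝ} (hω : ω ≠ 0) {s t : ℝ} :
    phaseFactor ω s = phaseFactor ω t ↔ ∃ m : ℤ, s = t + m * (2 * π / ω) := by
  rw [phaseFactor, phaseFactor, exp_eq_exp_iff_exists_int]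
  constructor
  · rintro ⟨n, hn⟩
    refine ⟨-n, ?_⟩
    have := congrArg im hn
    simp at this
    field_simp
    push_cast
    linarith
  · rintro ⟨m, rfl⟩
    refine ⟨-m, ?_⟩
    have : (ω : ℂ) ≠ 0 := ofReal_ne_zero.2 hω
    push_cast
    field_simp
    ring

lemma exists_phaseFactor_eq {ω : ℝ} (hω : ω ≠ 0) {u : ℂ} (hu : ‖u‖ = 1) :
    ∃ t, phaseFactor ω t = u := by
  refine ⟨-arg u / ω, ?_⟩
  have hexp := norm_mul_exp_arg_mul_I u
  rw [hu, ofReal_one, one_mul] at hexp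
  have : (ω : ℂ) ≠ 0 := ofReal_ne_zero.2 hω
  rw [phaseFactor]
  convert hexp using 2
  push_cast
  field_simp

lemma prodMap_phaseFactor_eq_iff {ω : ℝ} (hω : ω ≠ 0) {τ a : ℝ × ℝ} :
    Prod.map (phaseFactor ω) (phaseFactor ω) τ = Prod.map (phaseFactor ω) (phaseFactor ω) a ↔
      ∃ m n : ℤ, τ.1 = a.1 + m * (2 * π / ω) ∧ τ.2 = a.2 + n * (2 * π / ω) := by
  simp only [Prod.map, Prod.mk.injEq, phaseFactor_eq_phaseFactor_iff hω, exists_and_left,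
    exists_and_right]

lemma chi_I_mul_eq_zero_iff {α₀ α₁ β₁ β₂ ω : ℝ} {z : ℂ}
    (hz : z = ((ω ^ 2 - α₀ : ℝ) : ℂ) - I * ((α₁ * ω : ℝ) : ℂ)) (τ : ℝ × ℝ) :
    chi α₀ α₁ β₁ β₂ τ.1 τ.2 (I * ω) = 0 ↔
      Prod.map (phaseFactor ω) (phaseFactor ω) τ ∈ unitSolutions β₁ β₂ z := by
  simp only [unitSolutions, Set.mem_ofPred_eq, Prod.map_fst, Prod.map_snd, norm_phaseFactor,
    true_and]
  rw [chi, hz]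
  simp only [phaseFactor]
  push_cast
  constructor <;> intro h
  · linear_combination h - (ω : ℂ) ^ 2 * I_sq
  · linear_combination h + (ω : ℂ) ^ 2 * I_sq

theorem exists_two_delay_branches {α₀ α₁ β₁ β₂ ω : ℝ} (hω : ω ≠ 0) {z : ℂ}
    (hz : z = ((ω ^ 2 - α₀ : ℝ) : ℂ) - I * ((α₁ * ω : ℝ) : ℂ)) {P Q : ℂ × ℂ} (hPQ : P ≠ Q)
    (hS : unitSolutions β₁ β₂ z = {P, Q}) :
    ∃ a b : ℝ × ℝ,
      chi α₀ α₁ β₁ β₂ a.1 a.2 (I * ω) = 0 ∧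
      chi α₀ α₁ β₁ β₂ b.1 b.2 (I * ω) = 0 ∧
      (¬ ∃ m n : ℤ, b.1 = a.1 + m * (2 * π / ω) ∧ b.2 = a.2 + n * (2 * π / ω)) ∧
      ∀ τ : ℝ × ℝ, chi α₀ α₁ β₁ β₂ τ.1 τ.2 (I * ω) = 0 →
        ((∃ m n : ℤ, τ.1 = a.1 + m * (2 * π / ω) ∧ τ.2 = a.2 + n * (2 * π / ω)) ∨
         (∃ m n : ℤ, τ.1 = b.1 + m * (2 * π / ω) ∧ τ.2 = b.2 + n * (2 * π / ω))) := by
  have hsurj : ∀ p ∈ unitSolutions β₁ β₂ z,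
      ∃ a, Prod.map (phaseFactor ω) (phaseFactor ω) a = p := by
    rintro p ⟨h₁, h₂, -⟩
    obtain ⟨a₁, ha₁⟩ := exists_phaseFactor_eq hω h₁
    obtain ⟨a₂, ha₂⟩ := exists_phaseFactor_eq hω h₂
    exact ⟨(a₁, a₂), Prod.ext ha₁ ha₂⟩
  have hP : P ∈ unitSolutions β₁ β₂ z := hS ▸ Set.mem_insert _ _
  have hQ : Q ∈ unitSolutions β₁ β₂ z := hS ▸ Set.mem_insert_of_mem _ rfl
  obtain ⟨a, rfl⟩ := hsurj P hP
  obtain ⟨b, rfl⟩ := hsurj Q hQ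
  refine ⟨a, b, (chi_I_mul_eq_zero_iff hz a).2 hP, (chi_I_mul_eq_zero_iff hz b).2 hQ,
    fun h => hPQ ((prodMap_phaseFactor_eq_iff hω).2 h).symm, fun τ hτ => ?_⟩
  simp_rw [← prodMap_phaseFactor_eq_iff hω]
  simpa [hS] using (chi_I_mul_eq_zero_iff hz τ).1 hτ

theorem stmt11_general (β₁ β₂ : ℝ) (z : ℂ)
    (h₁ : |β₁ - β₂| < ‖z‖) (h₂ : ‖z‖ < β₁ + β₂) :
    (∃ p q : ℂ × ℂ,
      p ≠ q ∧
      {w : ℂ × ℂ | ‖w.1‖ = 1 ∧ ‖w.2‖ = 1 ∧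
        (β₁ : ℂ) * w.1 + (β₂ : ℂ) * w.2 = z} = {p, q} ∧
      ((z / (‖z‖ : ℂ)) ^ 2 * (starRingEnd ℂ) p.1,
        (z / (‖z‖ : ℂ)) ^ 2 * (starRingEnd ℂ) p.2) = q ∧
      ((z / (‖z‖ : ℂ)) ^ 2 * (starRingEnd ℂ) q.1,
        (z / (‖z‖ : ℂ)) ^ 2 * (starRingEnd ℂ) q.2) = p) ∧
    (∀ α₀ α₁ ω : ℝ, 0 < ω →
      z = ((ω ^ 2 - α₀ : ℝ) : ℂ) - Complex.I * ((α₁ * ω : ℝ) : ℂ) →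
      ∃ a b : ℝ × ℝ,
        chi α₀ α₁ β₁ β₂ a.1 a.2 (Complex.I * (ω : ℂ)) = 0 ∧
        chi α₀ α₁ β₁ β₂ b.1 b.2 (Complex.I * (ω : ℂ)) = 0 ∧
        (¬ ∃ m n : ℤ, b.1 = a.1 + m * (2 * Real.pi / ω) ∧
          b.2 = a.2 + n * (2 * Real.pi / ω)) ∧
        ∀ τ : ℝ × ℝ, chi α₀ α₁ β₁ β₂ τ.1 τ.2 (Complex.I * (ω : ℂ)) = 0 →
          ((∃ m n : ℤ, τ.1 = a.1 + m * (2 * Real.pi / ω) ∧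
              τ.2 = a.2 + n * (2 * Real.pi / ω)) ∨
           (∃ m n : ℤ, τ.1 = b.1 + m * (2 * Real.pi / ω) ∧
              τ.2 = b.2 + n * (2 * Real.pi / ω)))) := by
  have hr : 0 < ‖z‖ := (abs_nonneg _).trans_lt h₁
  set d : ℂ := z / (‖z‖ : ℂ)
  have hd : ‖d‖ = 1 := by simp [d, hr.ne']
  have hzd : z = d * ‖z‖ := by simp [d, hr.ne']
  obtain ⟨p, hp, hS⟩ := unitSolutions_ofReal_eq_pair h₁ h₂
  have hS' : unitSolutions β₁ β₂ z = {d • p, d • star p} := by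
    rw [hzd, unitSolutions_mul hd, hS, Set.smul_set_insert, Set.smul_set_singleton]
  have hd0 : d ≠ 0 := ne_zero_of_norm_ne_zero (hd ▸ one_ne_zero)
  have hPQ : d • p ≠ d • star p := (smul_right_injective _ hd0).ne hp
  refine ⟨⟨d • p, d • star p, hPQ, hS', ?_, ?_⟩,
    fun α₀ α₁ ω hω hzω => exists_two_delay_branches hω.ne' hzω hPQ hS'⟩
  all_goals ext <;> simp [sq_mul_conj_mul_of_norm_eq_one hd]

/-- If `z ≠ 0` and `|β₁ − β₂| < |z| < β₁ + β₂` (strict triangle inequalities), then the set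
of pairs `(u, v)` of unimodular complex numbers with `β₁u + β₂v = z` has exactly two
elements, interchanged by the reflection `(u, v) ↦ ((z/|z|)²·conj u, (z/|z|)²·conj v)`
across the direction of `z`. Consequently, for a fixed Hopf frequency `ω > 0` in this
regime (`z = (ω² − α₀) − iα₁ω`), the delay pairs `(τ₁, τ₂)` solving `χ(iω) = 0` form,
modulo `2π/ω` in each component, exactly two branches. -/
theorem stmt11 (β₁ β₂ : ℝ) (hβ₁ : 0 < β₁) (hβ₂ : 0 < β₂)
    (z : ℂ) (hz : z ≠ 0)
    (h₁ : |β₁ - β₂| < ‖z‖) (h₂ : ‖z‖ < β₁ + β₂) :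
    (∃ p q : ℂ × ℂ,
      p ≠ q ∧
      {w : ℂ × ℂ | ‖w.1‖ = 1 ∧ ‖w.2‖ = 1 ∧
        (β₁ : ℂ) * w.1 + (β₂ : ℂ) * w.2 = z} = {p, q} ∧
      ((z / (‖z‖ : ℂ)) ^ 2 * (starRingEnd ℂ) p.1,
        (z / (‖z‖ : ℂ)) ^ 2 * (starRingEnd ℂ) p.2) = q ∧
      ((z / (‖z‖ : ℂ)) ^ 2 * (starRingEnd ℂ) q.1,
        (z / (‖z‖ : ℂ)) ^ 2 * (starRingEnd ℂ) q.2) = p) ∧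
    (∀ α₀ α₁ ω : ℝ, 0 < ω →
      z = ((ω ^ 2 - α₀ : ℝ) : ℂ) - Complex.I * ((α₁ * ω : ℝ) : ℂ) →
      ∃ a b : ℝ × ℝ,
        chi α₀ α₁ β₁ β₂ a.1 a.2 (Complex.I * (ω : ℂ)) = 0 ∧
        chi α₀ α₁ β₁ β₂ b.1 b.2 (Complex.I * (ω : ℂ)) = 0 ∧
        (¬ ∃ m n : ℤ, b.1 = a.1 + m * (2 * Real.pi / ω) ∧
          b.2 = a.2 + n * (2 * Real.pi / ω)) ∧
        ∀ τ : ℝ × ℝ, chi α₀ α₁ β₁ β₂ τ.1 τ.2 (Complex.I * (ω : ℂ)) = 0 →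
          ((∃ m n : ℤ, τ.1 = a.1 + m * (2 * Real.pi / ω) ∧
              τ.2 = a.2 + n * (2 * Real.pi / ω)) ∨
           (∃ m n : ℤ, τ.1 = b.1 + m * (2 * Real.pi / ω) ∧
              τ.2 = b.2 + n * (2 * Real.pi / ω)))) :=
  stmt11_general β₁ β₂ z h₁ h₂
end
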